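/- arXiv:2505.08147 — 2 statements merged into one kernel-verified Lean document; each statement's English description precedes it below -/
import Mathlib

section
/- The function ‖x‖ := √(2(Re x)² + (Ze x)²) on R^(2) is an algebra norm: it is positive definite, satisfies the triangle inequality, is absolutely homogeneous over ℝ, and is submultiplicative, i.e. ‖xy‖ ≤ ‖x‖·‖y‖ for all x, y ∈ R^(2). -/
/-- The norm `‖x‖ = √(2(Re x)² + (Ze x)²)` on the dual real numbers. -/
noncomputable def dualNorm (x : DualNumber ℝ) : ℝ :=
  Real.sqrt (2 * (TrivSqZeroExt.fst x) ^ 2 + (TrivSqZeroExt.snd x) ^ 2)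

/-- `dualNorm` is an algebra norm: positive definite, triangle
inequality, absolutely homogeneous over `ℝ`, and submultiplicative. -/
theorem dualNorm_is_algebra_norm :
    (∀ x : DualNumber ℝ, 0 ≤ dualNorm x ∧ (dualNorm x = 0 ↔ x = 0)) ∧
    (∀ x y : DualNumber ℝ, dualNorm (x + y) ≤ dualNorm x + dualNorm y) ∧
    (∀ (r : ℝ) (x : DualNumber ℝ), dualNorm (r • x) = |r| * dualNorm x) ∧
    (∀ x y : DualNumber ℝ, dualNorm (x * y) ≤ dualNorm x * dualNorm y) := by
  refine ⟨?_, ?_, ?_, ?_⟩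
  · intro x
    refine ⟨Real.sqrt_nonneg _, ?_⟩
    rw [dualNorm, Real.sqrt_eq_zero']
    constructor
    · intro h
      have h1 : TrivSqZeroExt.fst x = 0 := by nlinarith [sq_nonneg (TrivSqZeroExt.fst x), sq_nonneg (TrivSqZeroExt.snd x)]
      have h2 : TrivSqZeroExt.snd x = 0 := by nlinarith [sq_nonneg (TrivSqZeroExt.fst x), sq_nonneg (TrivSqZeroExt.snd x)]
      exact TrivSqZeroExt.ext h1 h2
    · intro h; subst h; simp
  · intro x y
    set a := TrivSqZeroExt.fst x
    set b := TrivSqZeroExt.snd x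
    set c := TrivSqZeroExt.fst y
    set d := TrivSqZeroExt.snd y
    have hx : dualNorm x = Real.sqrt (2 * a ^ 2 + b ^ 2) := rfl
    have hy : dualNorm y = Real.sqrt (2 * c ^ 2 + d ^ 2) := rfl
    have hxy : dualNorm (x + y) = Real.sqrt (2 * (a + c) ^ 2 + (b + d) ^ 2) := by
      simp [dualNorm, a, b, c, d]
    rw [hx, hy, hxy]
    have h1 : (0:ℝ) ≤ 2 * a ^ 2 + b ^ 2 := by positivity
    have h2 : (0:ℝ) ≤ 2 * c ^ 2 + d ^ 2 := by positivity
    have key : 2 * a * c + b * d ≤ Real.sqrt ((2 * a ^ 2 + b ^ 2) * (2 * c ^ 2 + d ^ 2)) := by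
      rcases le_or_gt (2 * a * c + b * d) 0 with h | h
      · exact h.trans (Real.sqrt_nonneg _)
      · rw [show (2 * a * c + b * d) = Real.sqrt ((2 * a * c + b * d) ^ 2) from
          (Real.sqrt_sq h.le).symm]
        apply Real.sqrt_le_sqrt
        nlinarith [sq_nonneg (a * d - b * c)]
    have hmul : Real.sqrt (2 * a ^ 2 + b ^ 2) * Real.sqrt (2 * c ^ 2 + d ^ 2)
        = Real.sqrt ((2 * a ^ 2 + b ^ 2) * (2 * c ^ 2 + d ^ 2)) :=
      (Real.sqrt_mul h1 _).symm
    have hs := Real.sq_sqrt h1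
    have ht := Real.sq_sqrt h2
    have hrhs : 2 * (a + c) ^ 2 + (b + d) ^ 2
        ≤ (Real.sqrt (2 * a ^ 2 + b ^ 2) + Real.sqrt (2 * c ^ 2 + d ^ 2)) ^ 2 := by
      have : (Real.sqrt (2 * a ^ 2 + b ^ 2) + Real.sqrt (2 * c ^ 2 + d ^ 2)) ^ 2
          = (2 * a ^ 2 + b ^ 2) + (2 * c ^ 2 + d ^ 2)
            + 2 * Real.sqrt ((2 * a ^ 2 + b ^ 2) * (2 * c ^ 2 + d ^ 2)) := by
        rw [add_sq, hs, ht, mul_assoc 2, hmul]; ring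
      rw [this]; nlinarith
    calc Real.sqrt (2 * (a + c) ^ 2 + (b + d) ^ 2)
        ≤ Real.sqrt ((Real.sqrt (2 * a ^ 2 + b ^ 2) + Real.sqrt (2 * c ^ 2 + d ^ 2)) ^ 2) :=
          Real.sqrt_le_sqrt hrhs
      _ = _ := Real.sqrt_sq (by positivity)
  · intro r x
    have : dualNorm (r • x) = Real.sqrt (r ^ 2 * (2 * (TrivSqZeroExt.fst x) ^ 2 + (TrivSqZeroExt.snd x) ^ 2)) := by
      simp [dualNorm]; ring_nf
    rw [this, Real.sqrt_mul (sq_nonneg r), Real.sqrt_sq_eq_abs, dualNorm]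
  · intro x y
    set a := TrivSqZeroExt.fst x
    set b := TrivSqZeroExt.snd x
    set c := TrivSqZeroExt.fst y
    set d := TrivSqZeroExt.snd y
    have h1 : (0:ℝ) ≤ 2 * a ^ 2 + b ^ 2 := by positivity
    have hxy : dualNorm (x * y) = Real.sqrt (2 * (a * c) ^ 2 + (a * d + b * c) ^ 2) := by
      simp [dualNorm, a, b, c, d]
    rw [hxy, show dualNorm x * dualNorm y
        = Real.sqrt ((2 * a ^ 2 + b ^ 2) * (2 * c ^ 2 + d ^ 2)) from
      (Real.sqrt_mul h1 _).symm]
    apply Real.sqrt_le_sqrt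
    nlinarith [sq_nonneg (a * d - b * c), sq_nonneg (a * c), sq_nonneg (b * d)]
end

section
/- A symplectic R^(2)-module of finite (R^(2), R)-dimension (n', m') must have both n' and m' even: there exist non-negative integers n, m with n' = 2n and m' = 2m. -/
/-!
Let `M` be the real matrix `Re ω(e i, e j)` and `N` the matrix of `ε`-parts of `ω(f i, f j)`.
Both are antisymmetric, and an invertible antisymmetric real matrix has even size, since for
odd size `det M = det Mᵀ = -det M`.

`M` is invertible by (iv): if `c ᵥ* M = 0`, then `v = ∑ c i • e i` has `Re ω(v, ·) = 0` (the
`f j` are killed by `ε`, so `Re ω(·, f j) = 0`), hence `ε • v = 0`, which forces `c = 0`.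
`N` is invertible by (v): if `d ᵥ* N = 0`, then `u = ∑ d j • f j` pairs to zero with every `f j`,
and the invertibility of `M` yields `w` with `ω(u, ·) = ω(ε • w, ·)`. By (v), `u - ε • w` and
hence `u` lie in `Im ε`, and independence of the basis gives `d = 0`.
-/

open DualNumber TrivSqZeroExt Matrix

theorem Matrix.even_card_of_transpose_eq_neg {n R : Type*} [Fintype n] [DecidableEq n]
    [CommRing R] [NeZero (2 : R)] {A : Matrix n n R} (hA : Aᵀ = -A) (hunit : IsUnit A) :
    Even (Fintype.card n) := by
  by_contra hodd
  rw [Nat.not_even_iff_odd] at hodd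
  have hdet : A.det = -A.det := by
    conv_lhs => rw [← det_transpose, hA, det_neg, hodd.neg_one_pow, neg_one_mul]
  have htwo : (2 : R) * A.det = 0 := by linear_combination hdet
  exact NeZero.ne (2 : R) (((isUnit_iff_isUnit_det A).mp hunit).mul_left_eq_zero.mp htwo)

theorem Matrix.isUnit_of_forall_vecMul_eq_zero {n K : Type*} [Fintype n] [DecidableEq n]
    [Field K] {A : Matrix n n K} (hA : ∀ c, c ᵥ* A = 0 → c = 0) : IsUnit A :=
  vecMul_injective_iff_isUnit.mp fun c c' h =>
    sub_eq_zero.mp (hA _ (by rw [sub_vecMul]; exact sub_eq_zero.mpr h))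

namespace DualNumber

variable {R : Type*} [Semiring R]

theorem fst_eq_zero_of_eps_mul_eq_zero {a : R[ε]} (h : ε * a = 0) : a.fst = 0 := by
  simpa using congrArg snd h

theorem eq_eps_mul_of_fst_eq_zero {a b : R[ε]} (ha : a.fst = 0) (hab : a.snd = b.fst) :
    a = ε * b := by
  ext <;> simp [ha, hab]

end DualNumber

section Gram

variable {V : Type*} [AddCommGroup V] [Module ℝ[ε] V] (B : V →ₗ[ℝ[ε]] V →ₗ[ℝ[ε]] ℝ[ε])

theorem fst_apply_eq_zero_of_eps_smul_left {v : V} (hv : (ε : ℝ[ε]) • v = 0) (x : V) :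
    (B v x).fst = 0 :=
  fst_eq_zero_of_eps_mul_eq_zero (by rw [← smul_eq_mul, ← LinearMap.smul_apply, ← map_smul, hv,
    map_zero, LinearMap.zero_apply])

theorem fst_apply_eq_zero_of_eps_smul_right {v : V} (hv : (ε : ℝ[ε]) • v = 0) (x : V) :
    (B x v).fst = 0 :=
  fst_eq_zero_of_eps_mul_eq_zero (by rw [← smul_eq_mul, ← map_smul, hv, map_zero])

def realGram {ι : Type*} (π : ℝ[ε] →ₗ[ℝ] ℝ) (v : ι → V) : Matrix ι ι ℝ :=
  .of fun i j => π (B (v i) (v j))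

theorem realGram_transpose (hB : ∀ x y, B x y = -B y x) {ι : Type*} (π : ℝ[ε] →ₗ[ℝ] ℝ)
    (v : ι → V) : (realGram B π v)ᵀ = -realGram B π v := by
  ext i j
  simp [realGram, hB (v j) (v i)]

theorem vecMul_realGram {ι : Type*} [Fintype ι] (π : ℝ[ε] →ₗ[ℝ] ℝ) (v : ι → V) (c : ι → ℝ)
    (i : ι) : (c ᵥ* realGram B π v) i = π (B (∑ j, algebraMap ℝ ℝ[ε] (c j) • v j) (v i)) := by
  simp [vecMul, dotProduct, realGram, algebraMap_smul]

end Gram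

-- The paper's `(ℝ⁽²⁾, ℝ)`-basis.
structure DualRealBasis (V : Type*) [AddCommGroup V] [Module ℝ[ε] V] (n m : ℕ) where
  e : Fin n → V
  f : Fin m → V
  eps_smul_f : ∀ j, (ε : ℝ[ε]) • f j = 0
  indep : ∀ (c : Fin n → ℝ[ε]) (d : Fin m → ℝ),
    ∑ i, c i • e i + ∑ j, algebraMap ℝ ℝ[ε] (d j) • f j = 0 → c = 0 ∧ d = 0
  span : ∀ v : V, ∃ (c : Fin n → ℝ[ε]) (d : Fin m → ℝ),
    v = ∑ i, c i • e i + ∑ j, algebraMap ℝ ℝ[ε] (d j) • f j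

namespace DualRealBasis

variable {V : Type*} [AddCommGroup V] [Module ℝ[ε] V] {n m : ℕ} (b : DualRealBasis V n m)

theorem mem_of_forall_mem (p : Submodule ℝ[ε] V) (he : ∀ i, b.e i ∈ p) (hf : ∀ j, b.f j ∈ p)
    (v : V) : v ∈ p := by
  obtain ⟨c, d, rfl⟩ := b.span v
  exact p.add_mem (p.sum_mem fun i _ => p.smul_mem _ (he i))
    (p.sum_mem fun j _ => p.smul_mem _ (hf j))

theorem linearMap_ext {M : Type*} [AddCommGroup M] [Module ℝ[ε] M] {φ ψ : V →ₗ[ℝ[ε]] M}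
    (he : ∀ i, φ (b.e i) = ψ (b.e i)) (hf : ∀ j, φ (b.f j) = ψ (b.f j)) : φ = ψ :=
  LinearMap.ext (b.mem_of_forall_mem (LinearMap.eqLocus φ ψ) he hf)

theorem fst_eq_zero_of_forall (φ : V →ₗ[ℝ[ε]] ℝ[ε]) (he : ∀ i, (φ (b.e i)).fst = 0)
    (hf : ∀ j, (φ (b.f j)).fst = 0) (v : V) : (φ v).fst = 0 :=
  b.mem_of_forall_mem (Submodule.comap φ (RingHom.ker (fstHom ℝ ℝ ℝ))) he hf v

theorem eps_smul_sum_f (d : Fin m → ℝ[ε]) : (ε : ℝ[ε]) • ∑ j, d j • b.f j = 0 := by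
  simp [Finset.smul_sum, smul_comm (ε : ℝ[ε]) (d _), b.eps_smul_f]

theorem exists_eps_smul_eq (v : V) :
    ∃ c : Fin n → ℝ[ε], (ε : ℝ[ε]) • v = ∑ i, (ε * c i) • b.e i := by
  obtain ⟨c, d, rfl⟩ := b.span v
  refine ⟨c, ?_⟩
  rw [smul_add, b.eps_smul_sum_f, add_zero, Finset.smul_sum]
  simp [smul_smul]

theorem eq_zero_of_eps_smul_sum_e_eq_zero {c : Fin n → ℝ}
    (h : (ε : ℝ[ε]) • ∑ i, algebraMap ℝ ℝ[ε] (c i) • b.e i = 0) : c = 0 := by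
  have hεc := (b.indep (fun i => ε * algebraMap ℝ ℝ[ε] (c i)) 0
    (by simpa [Finset.smul_sum, smul_smul] using h)).1
  funext i
  simpa [algebraMap_eq_inl] using fst_eq_zero_of_eps_mul_eq_zero (congrFun hεc i)

theorem eq_zero_of_sum_f_eq_eps_smul {d : Fin m → ℝ} {w : V}
    (h : ∑ j, algebraMap ℝ ℝ[ε] (d j) • b.f j = (ε : ℝ[ε]) • w) : d = 0 := by
  obtain ⟨c, hc⟩ := b.exists_eps_smul_eq w
  refine (b.indep (fun i => -(ε * c i)) d ?_).2
  simp [neg_smul, Finset.sum_neg_distrib, h, hc]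

end DualRealBasis

section Symplectic

variable {V : Type*} [AddCommGroup V] [Module ℝ[ε] V] (B : V →ₗ[ℝ[ε]] V →ₗ[ℝ[ε]] ℝ[ε])
  {n m : ℕ} (b : DualRealBasis V n m)

theorem isUnit_realGram_fst (hB : ∀ v, (∀ x, (B v x).fst = 0) → (ε : ℝ[ε]) • v = 0) :
    IsUnit (realGram B (fstHom ℝ ℝ ℝ).toLinearMap b.e) := by
  refine isUnit_of_forall_vecMul_eq_zero fun c hc => b.eq_zero_of_eps_smul_sum_e_eq_zero
    (hB _ (b.fst_eq_zero_of_forall _ (fun i => ?_) fun j => ?_))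
  · exact (vecMul_realGram B _ b.e c i).symm.trans (congrFun hc i)
  · exact fst_apply_eq_zero_of_eps_smul_right B (b.eps_smul_f j) _

theorem isUnit_realGram_snd (hfst : IsUnit (realGram B (fstHom ℝ ℝ ℝ).toLinearMap b.e))
    (hB : ∀ v, (ε : ℝ[ε]) • v = 0 → (∀ x, B v x = 0) → ∃ w, v = (ε : ℝ[ε]) • w) :
    IsUnit (realGram B (sndHom ℝ ℝ) b.f) := by
  refine isUnit_of_forall_vecMul_eq_zero fun d hd => ?_
  set u := ∑ j, algebraMap ℝ ℝ[ε] (d j) • b.f j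
  have hεu : (ε : ℝ[ε]) • u = 0 := b.eps_smul_sum_f _
  obtain ⟨c, hc⟩ := vecMul_surjective_iff_isUnit.mpr hfst fun i => (B u (b.e i)).snd
  set w := ∑ i, algebraMap ℝ ℝ[ε] (c i) • b.e i
  have hBu : B u = B ((ε : ℝ[ε]) • w) := by
    refine b.linearMap_ext (fun i => ?_) (fun j => ?_) <;>
      rw [map_smul, LinearMap.smul_apply, smul_eq_mul] <;>
      refine eq_eps_mul_of_fst_eq_zero (fst_apply_eq_zero_of_eps_smul_left B hεu _) ?_
    · exact (congrFun hc i).symm.trans (vecMul_realGram B _ b.e c i)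
    · rw [fst_apply_eq_zero_of_eps_smul_right B (b.eps_smul_f j)]
      exact (vecMul_realGram B _ b.f d j).symm.trans (congrFun hd j)
  obtain ⟨w', hw'⟩ := hB (u - (ε : ℝ[ε]) • w)
    (by rw [smul_sub, hεu, smul_smul, eps_mul_eps, zero_smul, sub_zero])
    (fun x => by rw [map_sub, hBu, sub_self, LinearMap.zero_apply])
  exact b.eq_zero_of_sum_f_eq_eps_smul (w := w' + w) (by rw [smul_add, ← hw']; abel)

end Symplectic

/-- a symplectic `ℝ⁽²⁾`-module (with a Hu-Liu symplectic form
`ω`) of finite `(ℝ⁽²⁾, ℝ)`-dimension `(n', m')` has both `n'` and `m'` even. -/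
theorem symplectic_dim_even (V : Type*) [AddCommGroup V] [Module (DualNumber ℝ) V]
    (ω : V → V → DualNumber ℝ)
    -- (i) additivity in the first argument
    (h1 : ∀ x y z : V, ω (x + y) z = ω x z + ω y z)
    -- (ii) ℝ⁽²⁾-homogeneity in the first argument
    (h2 : ∀ (a : DualNumber ℝ) (x y : V), ω (a • x) y = a * ω x y)
    -- (iii) antisymmetry
    (h3 : ∀ x y : V, ω x y = -ω y x)
    -- (iv) if `Re ω(v,x) = 0` for all `x` then `v ∈ Ker 1#`
    (h4 : ∀ v : V, (∀ x : V, TrivSqZeroExt.fst (ω v x) = 0) → (ε : DualNumber ℝ) • v = 0)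
    -- (v) if `v ∈ Ker 1#` and `ω(v,·) = 0` then `v ∈ Im 1#`
    (h5 : ∀ v : V, (ε : DualNumber ℝ) • v = 0 → (∀ x : V, ω v x = 0) →
      ∃ w : V, v = (ε : DualNumber ℝ) • w)
    -- a finite `(ℝ⁽²⁾, ℝ)`-basis of dimension `(n', m')`
    (n' m' : ℕ) (e : Fin n' → V) (f : Fin m' → V)
    (hker : ∀ j, (ε : DualNumber ℝ) • f j = 0)
    (hindep : ∀ (c : Fin n' → DualNumber ℝ) (d : Fin m' → ℝ),
      ∑ i, c i • e i + ∑ j, algebraMap ℝ (DualNumber ℝ) (d j) • f j = 0 →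
      c = 0 ∧ d = 0)
    (hspan : ∀ v : V, ∃ (c : Fin n' → DualNumber ℝ) (d : Fin m' → ℝ),
      v = ∑ i, c i • e i + ∑ j, algebraMap ℝ (DualNumber ℝ) (d j) • f j) :
    ∃ n m : ℕ, n' = 2 * n ∧ m' = 2 * m := by
  let B : V →ₗ[ℝ[ε]] V →ₗ[ℝ[ε]] ℝ[ε] := LinearMap.mk₂ _ ω h1 h2
    (fun x y z => by rw [h3, h1, h3 y, h3 z]; ring) (fun a x y => by rw [h3, h2, h3 y]; ring)
  let b : DualRealBasis V n' m' := ⟨e, f, hker, hindep, hspan⟩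
  have hfst := isUnit_realGram_fst B b h4
  have hsnd := isUnit_realGram_snd B b hfst h5
  obtain ⟨n, hn⟩ := even_card_of_transpose_eq_neg (realGram_transpose B h3 _ _) hfst
  obtain ⟨m, hm⟩ := even_card_of_transpose_eq_neg (realGram_transpose B h3 _ _) hsnd
  rw [Fintype.card_fin] at hn hm
  exact ⟨n, m, by omega, by omega⟩
end
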